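/- For n odd with n = 2r + 3 and r ≥ 1: the two-variable Lucas sequence satisfies 𝓛_n(x,x) = x^n · L_n(1/x) interpreted as the polynomial Σ_j c_j x^{n−j} where L_n(t) = Σ_j c_j t^j; equivalently, g_{r+1}(x,x) + x^n equals x^n·L_n(x^{−1}) + x^n, i.e., p_{r+1}(x,x) = Σ_{j=0}^{⌊n/2⌋} c_j x^{n−j} + x^n where p_n(x,y) = g_n(x,y) + y^{2n+1}. -/

import Mathlib

open Polynomial

/-- `g₀ = x`, `g₁ = x³ + 3xy`, `gₙ = (x² + 2y)·gₙ₋₁ − y²·gₙ₋₂`. -/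
def gSeq {R : Type*} [CommRing R] (x y : R) : ℕ → R
  | 0 => x
  | 1 => x ^ 3 + 3 * x * y
  | n + 2 => (x ^ 2 + 2 * y) * gSeq x y (n + 1) - y ^ 2 * gSeq x y n

/-- `pₙ(x, y) = gₙ(x, y) + y^{2n+1}`. -/
def pSeq {R : Type*} [CommRing R] (x y : R) (n : ℕ) : R :=
  gSeq x y n + y ^ (2 * n + 1)

/-- The Lucas polynomials: `L₀ = 2`, `L₁ = 1`, `Lₙ = Lₙ₋₁ + t·Lₙ₋₂`, with
coefficients `cⱼ = (lucasPoly n).coeff j`. -/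
noncomputable def lucasPoly : ℕ → Polynomial ℤ
  | 0 => 2
  | 1 => 1
  | n + 2 => lucasPoly (n + 1) + X * lucasPoly n

/-!
The odd-indexed terms of the two-variable Lucas sequence satisfy
`𝓛ₙ₊₄ = (x² + 2y)·𝓛ₙ₊₂ − y²·𝓛ₙ`, so `gₙ = 𝓛₂ₙ₊₁`. On the diagonal `y = x` the recursion
`𝓛ₙ₊₂ = x·(𝓛ₙ₊₁ + 𝓛ₙ)` is the recursion of the Lucas polynomials read backwards, so
`𝓛ₙ(x, x) = xⁿ·Lₙ(1/x)` is the reflection of `Lₙ` at degree `n`; since `deg Lₙ ≤ n/2`, its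
coefficient sum may be cut off at `⌊n/2⌋`.
-/

/-- `𝓛ₙ(x, y)` -/
def lucasSeq {R : Type*} [CommRing R] (x y : R) : ℕ → R
  | 0 => 2
  | 1 => x
  | n + 2 => x * lucasSeq x y (n + 1) + y * lucasSeq x y n

section LucasSeq

variable {R : Type*} [CommRing R] (x y : R)

theorem lucasSeq_add_four (n : ℕ) :
    lucasSeq x y (n + 4) = (x ^ 2 + 2 * y) * lucasSeq x y (n + 2) - y ^ 2 * lucasSeq x y n := by
  have h2 : lucasSeq x y (n + 2) = x * lucasSeq x y (n + 1) + y * lucasSeq x y n := rfl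
  have h3 : lucasSeq x y (n + 3) = x * lucasSeq x y (n + 2) + y * lucasSeq x y (n + 1) := rfl
  have h4 : lucasSeq x y (n + 4) = x * lucasSeq x y (n + 3) + y * lucasSeq x y (n + 2) := rfl
  linear_combination h4 + x * h3 - y * h2

theorem gSeq_eq_lucasSeq (n : ℕ) : gSeq x y n = lucasSeq x y (2 * n + 1) := by
  induction n using Nat.twoStepInduction with
  | zero => rfl
  | one => simp only [gSeq, lucasSeq]; ring
  | more n ih₀ ih₁ =>
    rw [gSeq, ih₁, ih₀, show 2 * (n + 2) + 1 = 2 * n + 1 + 4 by ring, lucasSeq_add_four]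
    ring_nf

end LucasSeq

theorem natDegree_lucasPoly_le (n : ℕ) : (lucasPoly n).natDegree ≤ n / 2 := by
  induction n using Nat.twoStepInduction with
  | zero => simp [lucasPoly]
  | one => simp [lucasPoly]
  | more n ih₀ ih₁ =>
    rw [lucasPoly]
    refine (natDegree_add_le _ _).trans (max_le (ih₁.trans (by omega)) ?_)
    exact natDegree_mul_le.trans (by have := natDegree_X_le (R := ℤ); omega)

section Reflect

variable {R : Type*} [Semiring R]

theorem reflect_succ_of_natDegree_le {p : R[X]} {N : ℕ} (hp : p.natDegree ≤ N) :
    p.reflect (N + 1) = X * p.reflect N := by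
  have := reflect_mul 1 p (F := 1) (natDegree_one.trans_le zero_le_one) hp
  rw [one_mul, add_comm] at this
  simpa using this

theorem reflect_X_mul_of_natDegree_le {p : R[X]} {N : ℕ} (hp : p.natDegree ≤ N) :
    (X * p).reflect (N + 2) = X * p.reflect N := by
  have := reflect_mul X p (F := 2) (natDegree_X_le.trans one_le_two) hp
  have hX : (X : R[X]).reflect 2 = X := by simpa using reflect_monomial (R := R) 2 1
  rwa [add_comm, hX] at this

theorem reflect_sum {ι : Type*} (s : Finset ι) (f : ι → R[X]) (N : ℕ) :
    (∑ i ∈ s, f i).reflect N = ∑ i ∈ s, (f i).reflect N :=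
  map_sum ({ toFun := reflect N, map_zero' := reflect_zero, map_add' := (reflect_add · · N) } :
    R[X] →+ R[X]) f s

theorem reflect_eq_sum_range {p : R[X]} {N m : ℕ} (hm : p.natDegree < m) (hmN : m ≤ N + 1) :
    p.reflect N = ∑ j ∈ Finset.range m, p.coeff j • (X : R[X]) ^ (N - j) := by
  conv_lhs => rw [as_sum_range_C_mul_X_pow' p hm]
  simp only [reflect_sum, reflect_C_mul_X_pow, smul_eq_C_mul]
  refine Finset.sum_congr rfl fun j hj => ?_
  rw [revAt_le (by rw [Finset.mem_range] at hj; omega)]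

end Reflect

theorem lucasSeq_X_X_eq_reflect_lucasPoly (n : ℕ) :
    lucasSeq (X : ℤ[X]) X n = (lucasPoly n).reflect n := by
  have hdeg (k : ℕ) : (lucasPoly k).natDegree ≤ k :=
    (natDegree_lucasPoly_le k).trans (Nat.div_le_self k 2)
  induction n using Nat.twoStepInduction with
  | zero => simpa [lucasSeq, lucasPoly] using (reflect_C (2 : ℤ) 0).symm
  | one => simp [lucasSeq, lucasPoly, reflect_one]
  | more n ih₀ ih₁ =>
    rw [lucasSeq, lucasPoly, reflect_add, reflect_succ_of_natDegree_le (hdeg _),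
      reflect_X_mul_of_natDegree_le (hdeg _), ih₀, ih₁]

theorem pSeq_diag_eq_lucas_reversal_general (r : ℕ) :
    pSeq (X : Polynomial ℤ) X (r + 1) =
      (∑ j ∈ Finset.range ((2 * r + 3) / 2 + 1),
        ((lucasPoly (2 * r + 3)).coeff j) • (X : Polynomial ℤ) ^ (2 * r + 3 - j))
      + X ^ (2 * r + 3) := by
  rw [pSeq, gSeq_eq_lucasSeq, show 2 * (r + 1) + 1 = 2 * r + 3 by ring,
    lucasSeq_X_X_eq_reflect_lucasPoly,
    reflect_eq_sum_range (Nat.lt_succ_of_le (natDegree_lucasPoly_le _)) (by omega)]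

/-- For odd `n = 2r + 3` with `r ≥ 1`:
`p_{r+1}(x, x) = Σ_{j=0}^{⌊n/2⌋} cⱼ x^{n-j} + xⁿ`, where `Lₙ(t) = Σⱼ cⱼ tʲ`
(i.e. `p_{r+1}(x,x) = xⁿ·Lₙ(1/x) + xⁿ` interpreted polynomially). -/
theorem pSeq_diag_eq_lucas_reversal (r : ℕ) (hr : 1 ≤ r) :
    pSeq (X : Polynomial ℤ) X (r + 1) =
      (∑ j ∈ Finset.range ((2 * r + 3) / 2 + 1),
        ((lucasPoly (2 * r + 3)).coeff j) • (X : Polynomial ℤ) ^ (2 * r + 3 - j))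
      + X ^ (2 * r + 3) :=
  pSeq_diag_eq_lucas_reversal_general r
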